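/- Let A₁,…,A_n be d×d real matrices, let m > 0, 0 < h ≤ m, σ_h ∈ ℝ, and let ‖·‖₁,…,‖·‖_n be norms on ℝ^d forming an extremal multinorm datum for the h-discretization with value σ_h. Set c = max_{j=1,…,n} ‖(A_j − σ_h I)²‖_j, where ‖·‖_j also denotes the operator norm induced by the norm ‖·‖_j, and assume c·h² < 8. Set α = σ_h − (1/m)·ln(1 − c h²/8). Then for every trajectory x of the switched system for {A₁,…,A_n} with dwell time at least m, with switching times 0 = t₀ < t₁ < t₂ < ⋯ and modes j₀, j₁, j₂, …: (i) for every index k and every t ∈ [t_k + m, t_{k+1}] one has ‖x(t)‖_{j_k} ≤ e^{α t} ‖x(0)‖_{j_0}; and (ii) for any fixed norm ‖·‖ on ℝ^d there exists a constant C ≥ 0 such that ‖x(t)‖ ≤ C e^{α t} for all t ≥ 0. -/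

import Mathlib

open scoped ENNReal

/-- `N` is a norm on `ℝ^d`: subadditive, absolutely homogeneous, and definite. -/
def IsNorm {d : ℕ} (N : (Fin d → ℝ) → ℝ) : Prop :=
  (∀ x y, N (x + y) ≤ N x + N y) ∧
  (∀ (c : ℝ) (x), N (c • x) = |c| * N x) ∧
  (∀ x, N x = 0 → x = 0)

/-- The operator norm of the matrix `M`, induced by the norm `N` on `ℝ^d`:
`sup { N (M x) : N x ≤ 1 }`. -/
noncomputable def opNorm {d : ℕ} (N : (Fin d → ℝ) → ℝ) (M : Matrix (Fin d) (Fin d) ℝ) : ℝ :=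
  sSup {r : ℝ | ∃ x, N x ≤ 1 ∧ r = N (M.mulVec x)}

/-!
Shift each mode to `B = A_j - σ_h I`, so that `e^{hB}` is a contraction for `‖·‖_j`. For
`0 ≤ r ≤ h`, the curve `f u = e^{uB} z` satisfies `f'' = B² f`, and comparing `f r` with the
secant through `f 0 = z` and `f h` (via a norming functional and convexity) gives
`‖f r‖_j ≤ ‖z‖_j + c M h² / 8`, where `M` is the maximum of `‖f‖_j` on `[0, h]`. Taking `r` at
the maximum yields `M ≤ ρ ‖z‖_j` with `ρ = (1 - c h² / 8)⁻¹`, hence `‖e^{τ A_j}‖_j ≤ ρ e^{σ_h τ}`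
for all `τ ≥ 0`. Along a trajectory, a switching interval of length `u ≥ m`, measured from the
norm of the previous mode, costs at most `e^{σ_h m}` (extremality) times `ρ e^{σ_h (u - m)}`,
and `ρ e^{σ_h u} ≤ e^{α u}`; induction over the switching intervals gives (i), and (ii) follows
by combining (i) at the last switch before `s` with the equivalence of norms on `ℝ^d`.
-/

open scoped Matrix
open NormedSpace

namespace IsNorm

variable {d : ℕ} {N : (Fin d → ℝ) → ℝ}

lemma add_le (hN : IsNorm N) (x y : Fin d → ℝ) : N (x + y) ≤ N x + N y := hN.1 x y

lemma smul (hN : IsNorm N) (c : ℝ) (x : Fin d → ℝ) : N (c • x) = |c| * N x := hN.2.1 c x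

lemma map_zero (hN : IsNorm N) : N 0 = 0 := by
  simpa using hN.smul 0 0

lemma map_neg (hN : IsNorm N) (x : Fin d → ℝ) : N (-x) = N x := by
  simpa using hN.smul (-1) x

lemma nonneg (hN : IsNorm N) (x : Fin d → ℝ) : 0 ≤ N x := by
  have h := hN.add_le x (-x)
  rw [add_neg_cancel, hN.map_zero, hN.map_neg] at h
  linarith

end IsNorm

/-- A copy of `ℝ^d` whose norm is `N`, so that the theory of finite-dimensional normed spaces
(equivalence of norms, Hahn–Banach, operator norms) applies to `N`. -/
def NormedBy {d : ℕ} (_N : (Fin d → ℝ) → ℝ) : Type := Fin d → ℝ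

namespace NormedBy

variable {d : ℕ} {N : (Fin d → ℝ) → ℝ}

instance : AddCommGroup (NormedBy N) := inferInstanceAs (AddCommGroup (Fin d → ℝ))
instance : Module ℝ (NormedBy N) := inferInstanceAs (Module ℝ (Fin d → ℝ))
instance : FiniteDimensional ℝ (NormedBy N) :=
  inferInstanceAs (FiniteDimensional ℝ (Fin d → ℝ))

def equiv : (Fin d → ℝ) ≃ₗ[ℝ] NormedBy N := LinearEquiv.refl ℝ _

instance : Norm (NormedBy N) := ⟨fun x => N (equiv.symm x)⟩

variable [hN : Fact (IsNorm N)]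

lemma core : NormedSpace.Core ℝ (NormedBy N) where
  norm_nonneg := hN.out.nonneg
  norm_smul := hN.out.smul
  norm_triangle := hN.out.add_le
  norm_eq_zero_iff x := ⟨hN.out.2.2 x, fun hx => hx ▸ hN.out.map_zero⟩

noncomputable instance : NormedAddCommGroup (NormedBy N) := .ofCore core

noncomputable instance : NormedSpace ℝ (NormedBy N) := .ofCore core

noncomputable def equivL : (Fin d → ℝ) ≃L[ℝ] NormedBy N := equiv.toContinuousLinearEquiv

noncomputable def mulVecL (M : Matrix (Fin d) (Fin d) ℝ) : NormedBy N →L[ℝ] NormedBy N :=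
  LinearMap.toContinuousLinearMap (equiv.toLinearMap ∘ₗ M.mulVecLin ∘ₗ equiv.symm.toLinearMap)

lemma opNorm_eq_norm_mulVecL (M : Matrix (Fin d) (Fin d) ℝ) :
    opNorm N M = ‖(mulVecL M : NormedBy N →L[ℝ] NormedBy N)‖ := by
  rw [← ContinuousLinearMap.sSup_unitClosedBall_eq_norm]
  refine congrArg sSup (Set.ext fun r => ?_)
  simp only [Set.mem_ofPred_eq, Set.mem_image, Metric.mem_closedBall, dist_zero_right]
  constructor
  · rintro ⟨x, hx, rfl⟩; exact ⟨equiv x, hx, rfl⟩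
  · rintro ⟨x, hx, rfl⟩; exact ⟨equiv.symm x, hx, rfl⟩

end NormedBy

lemma le_secant_add_of_neg_le_deriv2 {g g' g'' : ℝ → ℝ} {h K : ℝ} (hh : 0 < h)
    (hg : ∀ u, HasDerivAt g (g' u) u) (hg' : ∀ u, HasDerivAt g' (g'' u) u)
    (hK : ∀ u ∈ Set.Icc 0 h, -K ≤ g'' u) {r : ℝ} (hr : r ∈ Set.Icc 0 h) :
    g r ≤ (1 - r / h) * g 0 + r / h * g h + K * (r * (h - r)) / 2 := by
  -- `g + K u² / 2` has nonnegative second derivative, so it lies below its secant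
  have hconv : ConvexOn ℝ (Set.Icc 0 h) fun u => g u + K * u ^ 2 / 2 := by
    have hq : ∀ u, HasDerivAt (fun u => g u + K * u ^ 2 / 2) (g' u + K * u) u := fun u =>
      ((hg u).add (((hasDerivAt_pow 2 u).const_mul K).div_const 2)).congr_deriv (by simp; ring)
    have hq' : ∀ u, HasDerivAt (fun u => g' u + K * u) (g'' u + K) u := fun u =>
      ((hg' u).add ((hasDerivAt_id u).const_mul K)).congr_deriv (by simp)
    refine convexOn_of_hasDerivWithinAt2_nonneg (convex_Icc 0 h)
      (fun u _ => (hq u).continuousAt.continuousWithinAt)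
      (fun u _ => (hq u).hasDerivWithinAt) (fun u _ => (hq' u).hasDerivWithinAt) fun u hu => ?_
    linarith [hK u (interior_subset hu)]
  have hθ : 0 ≤ r / h := div_nonneg hr.1 hh.le
  have hθ' : 0 ≤ 1 - r / h := sub_nonneg.2 ((div_le_one hh).2 hr.2)
  have key := hconv.2 (Set.left_mem_Icc.2 hh.le) (Set.right_mem_Icc.2 hh.le) hθ' hθ (by ring)
  have hr_eq : (1 - r / h) • (0 : ℝ) + (r / h) • h = r := by simp [hh.ne']
  have hsecant_eq : r / h * (g h + K * h ^ 2 / 2) = r / h * g h + K * (r * h) / 2 := by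
    field_simp
  rw [hr_eq] at key
  simp only [smul_eq_mul] at key
  linarith

lemma hasDerivAt_exp_smul_mulVec {d : ℕ} (B : Matrix (Fin d) (Fin d) ℝ) (z : Fin d → ℝ)
    (u : ℝ) :
    HasDerivAt (fun u : ℝ => exp (u • B) *ᵥ z) (B *ᵥ (exp (u • B) *ᵥ z)) u := by
  let _ : NormedRing (Matrix (Fin d) (Fin d) ℝ) := Matrix.linftyOpNormedRing
  let _ : NormedAlgebra ℝ (Matrix (Fin d) (Fin d) ℝ) := Matrix.linftyOpNormedAlgebra
  let applyTo : Matrix (Fin d) (Fin d) ℝ →L[ℝ] (Fin d → ℝ) :=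
    LinearMap.toContinuousLinearMap (LinearMap.applyₗ z ∘ₗ Matrix.toLin'.toLinearMap)
  have h : HasDerivAt (fun u : ℝ => exp (u • B) *ᵥ z) ((B * exp (u • B)) *ᵥ z) u :=
    applyTo.hasFDerivAt.comp_hasDerivAt u (hasDerivAt_exp_smul_const' B u)
  rwa [← Matrix.mulVec_mulVec] at h

lemma exp_add_smul {d : ℕ} (A : Matrix (Fin d) (Fin d) ℝ) (r u : ℝ) :
    exp ((r + u) • A) = exp (r • A) * exp (u • A) := by
  rw [add_smul]
  exact Matrix.exp_add_of_commute _ _ ((Commute.refl A).smul_left r |>.smul_right u)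

lemma exp_natCast_mul_smul {d : ℕ} (A : Matrix (Fin d) (Fin d) ℝ) (q : ℕ) (h : ℝ) :
    exp (((q : ℝ) * h) • A) = exp (h • A) ^ q := by
  rw [← smul_smul, Nat.cast_smul_eq_nsmul, Matrix.exp_nsmul]

lemma exp_smul_add_smul_one {d : ℕ} (B : Matrix (Fin d) (Fin d) ℝ) (r σ : ℝ) :
    exp (r • (B + σ • 1)) = Real.exp (r * σ) • exp (r • B) := by
  rw [smul_add, smul_smul,
    Matrix.exp_add_of_commute _ _ ((Commute.one_right B).smul_left r |>.smul_right _),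
    Matrix.smul_one_eq_diagonal, Matrix.exp_diagonal, Pi.exp_def, ← Real.exp_eq_exp_ℝ,
    ← Matrix.smul_one_eq_diagonal, mul_smul_one]

namespace IsNorm

variable {d : ℕ} {N N' : (Fin d → ℝ) → ℝ}

open NormedBy

lemma continuous (hN : IsNorm N) : Continuous N :=
  have : Fact (IsNorm N) := ⟨hN⟩
  continuous_norm.comp (equivL (N := N)).continuous

lemma exists_le_mul (hN : IsNorm N) (hN' : IsNorm N') : ∃ K, 0 ≤ K ∧ ∀ x, N x ≤ K * N' x := by
  have : Fact (IsNorm N) := ⟨hN⟩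
  have : Fact (IsNorm N') := ⟨hN'⟩
  let T : NormedBy N' →L[ℝ] NormedBy N :=
    (equivL (N := N)).toContinuousLinearMap.comp (equivL (N := N')).symm.toContinuousLinearMap
  exact ⟨‖T‖, norm_nonneg T, fun x => T.le_opNorm (equiv x)⟩

lemma opNorm_nonneg (hN : IsNorm N) (M : Matrix (Fin d) (Fin d) ℝ) : 0 ≤ opNorm N M := by
  have : Fact (IsNorm N) := ⟨hN⟩
  rw [opNorm_eq_norm_mulVecL]
  exact norm_nonneg _

lemma le_opNorm_mul (hN : IsNorm N) (M : Matrix (Fin d) (Fin d) ℝ) (x : Fin d → ℝ) :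
    N (M *ᵥ x) ≤ opNorm N M * N x := by
  have : Fact (IsNorm N) := ⟨hN⟩
  rw [opNorm_eq_norm_mulVecL]
  exact (mulVecL M).le_opNorm (equiv x)

lemma apply_mulVec_le_iSup_opNorm_mul {ι : Type*} [Finite ι] {Ns : ι → (Fin d → ℝ) → ℝ}
    (hNs : ∀ i, IsNorm (Ns i)) (M : ι → Matrix (Fin d) (Fin d) ℝ) (i : ι) (x : Fin d → ℝ) :
    Ns i (M i *ᵥ x) ≤ (⨆ i, opNorm (Ns i) (M i)) * Ns i x :=
  ((hNs i).le_opNorm_mul _ x).trans <| mul_le_mul_of_nonneg_right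
    (le_ciSup (f := fun i => opNorm (Ns i) (M i)) (Set.finite_range _).bddAbove i)
    ((hNs i).nonneg x)

lemma exists_dual (hN : IsNorm N) (v : Fin d → ℝ) :
    ∃ ψ : (Fin d → ℝ) →L[ℝ] ℝ, ψ v = N v ∧ ∀ y, ψ y ≤ N y := by
  have : Fact (IsNorm N) := ⟨hN⟩
  obtain ⟨g, hg, hgv⟩ := exists_dual_vector'' ℝ (equiv v : NormedBy N)
  refine ⟨g.comp (equivL (N := N)).toContinuousLinearMap, hgv, fun y => ?_⟩
  calc g (equiv y) ≤ ‖g‖ * ‖(equiv y : NormedBy N)‖ := (le_abs_self _).trans (g.le_opNorm _)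
    _ ≤ N y := mul_le_of_le_one_left (hN.nonneg y) hg

lemma exists_forall_le_mul {ι κ : Type*} [Fintype ι] [Fintype κ]
    {Ns : ι → (Fin d → ℝ) → ℝ} {Ns' : κ → (Fin d → ℝ) → ℝ} (hNs : ∀ i, IsNorm (Ns i))
    (hNs' : ∀ i, IsNorm (Ns' i)) : ∃ K, 0 ≤ K ∧ ∀ i i' y, Ns i y ≤ K * Ns' i' y := by
  choose K hK0 hK using fun (p : ι × κ) => (hNs p.1).exists_le_mul (hNs' p.2)
  refine ⟨∑ p, K p, Finset.sum_nonneg fun p _ => hK0 p, fun i i' y => (hK (i, i') y).trans ?_⟩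
  gcongr
  · exact (hNs' i').nonneg y
  · exact Finset.single_le_sum (fun p _ => hK0 p) (Finset.mem_univ (i, i'))

lemma sub_secant_le (hN : IsNorm N) {f f' f'' : ℝ → Fin d → ℝ} {h K : ℝ} (hh : 0 < h)
    (hf : ∀ u, HasDerivAt f (f' u) u) (hf' : ∀ u, HasDerivAt f' (f'' u) u)
    (hK : ∀ u ∈ Set.Icc 0 h, N (f'' u) ≤ K) {r : ℝ} (hr : r ∈ Set.Icc 0 h) :
    N (f r - ((1 - r / h) • f 0 + (r / h) • f h)) ≤ K * (r * (h - r)) / 2 := by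
  obtain ⟨ψ, hψv, hψN⟩ := hN.exists_dual (f r - ((1 - r / h) • f 0 + (r / h) • f h))
  have hψK : ∀ u ∈ Set.Icc 0 h, -K ≤ ψ (f'' u) := fun u hu => by
    have := (hψN (-f'' u)).trans_eq (hN.map_neg _)
    rw [_root_.map_neg] at this
    linarith [hK u hu]
  have := le_secant_add_of_neg_le_deriv2 hh (fun u => ψ.hasFDerivAt.comp_hasDerivAt u (hf u))
    (fun u => ψ.hasFDerivAt.comp_hasDerivAt u (hf' u)) hψK hr
  simp only [Function.comp_apply] at this
  rw [← hψv, map_sub, map_add, map_smul, map_smul, smul_eq_mul, smul_eq_mul]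
  linarith

lemma apply_exp_smul_mulVec_le_of_mem_Icc (hN : IsNorm N) {B : Matrix (Fin d) (Fin d) ℝ}
    {h c : ℝ} (hh : 0 < h)
    (hcontr : ∀ z, N (exp (h • B) *ᵥ z) ≤ N z) (hc0 : 0 ≤ c)
    (hc : ∀ y, N ((B ^ 2) *ᵥ y) ≤ c * N y) (hch : c * h ^ 2 < 8)
    (z : Fin d → ℝ) {r : ℝ} (hr : r ∈ Set.Icc 0 h) :
    N (exp (r • B) *ᵥ z) ≤ (1 - c * h ^ 2 / 8)⁻¹ * N z := by
  set f : ℝ → Fin d → ℝ := fun u => exp (u • B) *ᵥ z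
  have hf : ∀ u, HasDerivAt f (B *ᵥ f u) u := hasDerivAt_exp_smul_mulVec B z
  have hf' : ∀ u, HasDerivAt (fun u => B *ᵥ f u) ((B ^ 2) *ᵥ f u) u := fun u => by
    rw [sq, ← Matrix.mulVec_mulVec]
    exact (LinearMap.toContinuousLinearMap B.mulVecLin).hasFDerivAt.comp_hasDerivAt u (hf u)
  have hf_cont : Continuous f := continuous_iff_continuousAt.2 fun u => (hf u).continuousAt
  obtain ⟨s₀, hs₀, hmax⟩ := isCompact_Icc.exists_isMaxOn (Set.nonempty_Icc.2 hh.le)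
    (hN.continuous.comp hf_cont).continuousOn
  set M := N (f s₀)
  have hf0 : f 0 = z := by simp [f]
  have hfh : N (f h) ≤ N z := hcontr z
  have hbound : ∀ s ∈ Set.Icc 0 h, N (f s) ≤ N z + c * M * h ^ 2 / 8 := by
    intro s hs
    set secant := (1 - s / h) • f 0 + (s / h) • f h
    have herr := hN.sub_secant_le hh hf hf' (K := c * M)
      (fun u hu => (hc _).trans (mul_le_mul_of_nonneg_left (hmax hu) hc0)) hs
    have hθ : 0 ≤ s / h := div_nonneg hs.1 hh.le
    have hθ' : 0 ≤ 1 - s / h := sub_nonneg.2 ((div_le_one hh).2 hs.2)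
    have hsec : N secant ≤ N z :=
      calc N secant ≤ (1 - s / h) * N (f 0) + s / h * N (f h) := by
            simpa only [hN.smul, abs_of_nonneg hθ, abs_of_nonneg hθ'] using
              hN.add_le ((1 - s / h) • f 0) ((s / h) • f h)
        _ ≤ N z := by rw [hf0]; nlinarith
    have hcM : 0 ≤ c * M := mul_nonneg hc0 (hN.nonneg _)
    calc N (f s) ≤ N secant + N (f s - secant) := by simpa using hN.add_le secant (f s - secant)
      _ ≤ N z + c * M * (s * (h - s)) / 2 := add_le_add hsec herr
      _ ≤ N z + c * M * h ^ 2 / 8 := by nlinarith [sq_nonneg (h - 2 * s)]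
  have hden : 0 < 1 - c * h ^ 2 / 8 := by linarith
  have hM : M ≤ (1 - c * h ^ 2 / 8)⁻¹ * N z := by
    rw [le_inv_mul_iff₀ hden]
    nlinarith [hbound s₀ hs₀]
  exact (hmax hr).trans hM

lemma apply_exp_smul_mulVec_le (hN : IsNorm N) {B : Matrix (Fin d) (Fin d) ℝ} {h c : ℝ}
    (hh : 0 < h) (hcontr : ∀ z, N (exp (h • B) *ᵥ z) ≤ N z) (hc0 : 0 ≤ c)
    (hc : ∀ y, N ((B ^ 2) *ᵥ y) ≤ c * N y) (hch : c * h ^ 2 < 8)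
    (z : Fin d → ℝ) {τ : ℝ} (hτ : 0 ≤ τ) :
    N (exp (τ • B) *ᵥ z) ≤ (1 - c * h ^ 2 / 8)⁻¹ * N z := by
  set q := ⌊τ / h⌋₊
  have hq : (q : ℝ) * h ≤ τ := (le_div_iff₀ hh).1 (Nat.floor_le (div_nonneg hτ hh.le))
  have hq' : τ < (q + 1) * h := (div_lt_iff₀ hh).1 (Nat.lt_floor_add_one _)
  have hpow : ∀ (k : ℕ) w, N (exp (h • B) ^ k *ᵥ w) ≤ N w := by
    intro k
    induction k with
    | zero => simp
    | succ k ih =>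
      intro w
      rw [pow_succ, ← Matrix.mulVec_mulVec]
      exact (ih _).trans (hcontr w)
  rw [show τ = (τ - q * h) + q * h by ring, exp_add_smul, exp_natCast_mul_smul,
    ← Matrix.mulVec_mulVec]
  have hden : 0 < 1 - c * h ^ 2 / 8 := by linarith
  exact (hN.apply_exp_smul_mulVec_le_of_mem_Icc hh hcontr hc0 hc hch _
    ⟨by linarith, by linarith⟩).trans (mul_le_mul_of_nonneg_left (hpow q z) (inv_pos.2 hden).le)

lemma apply_exp_smul_mulVec_le_mul_exp (hN : IsNorm N) {A : Matrix (Fin d) (Fin d) ℝ}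
    {h σ c : ℝ} (hh : 0 < h) (hstep : ∀ z, N (exp (h • A) *ᵥ z) ≤ Real.exp (σ * h) * N z)
    (hc0 : 0 ≤ c) (hc : ∀ y, N (((A - σ • 1) ^ 2) *ᵥ y) ≤ c * N y) (hch : c * h ^ 2 < 8)
    (z : Fin d → ℝ) {τ : ℝ} (hτ : 0 ≤ τ) :
    N (exp (τ • A) *ᵥ z) ≤ (1 - c * h ^ 2 / 8)⁻¹ * Real.exp (σ * τ) * N z := by
  obtain ⟨B, rfl⟩ : ∃ B, A = B + σ • 1 := ⟨A - σ • 1, by abel⟩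
  rw [add_sub_cancel_right] at hc
  have hsplit : ∀ τ w,
      N (exp (τ • (B + σ • 1)) *ᵥ w) = Real.exp (σ * τ) * N (exp (τ • B) *ᵥ w) := fun τ w => by
    rw [exp_smul_add_smul_one, Matrix.smul_mulVec, hN.smul, abs_of_pos (Real.exp_pos _),
      mul_comm τ]
  have hcontr : ∀ w, N (exp (h • B) *ᵥ w) ≤ N w := fun w => by
    have := hstep w
    rw [hsplit] at this
    exact le_of_mul_le_mul_left this (Real.exp_pos _)
  rw [hsplit, mul_comm _ (Real.exp _), mul_assoc]
  exact mul_le_mul_of_nonneg_left (hN.apply_exp_smul_mulVec_le hh hcontr hc0 hc hch z hτ)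
    (Real.exp_pos _).le

end IsNorm

lemma mul_exp_le_exp_add_log_div_mul {ρ m σ u : ℝ} (hρ : 1 ≤ ρ) (hm : 0 < m) (hu : m ≤ u) :
    ρ * Real.exp (σ * u) ≤ Real.exp ((σ + Real.log ρ / m) * u) := by
  have hlog : Real.log ρ ≤ Real.log ρ / m * u := by
    rw [div_mul_eq_mul_div, le_div_iff₀ hm]
    nlinarith [Real.log_nonneg hρ]
  calc ρ * Real.exp (σ * u) = Real.exp (Real.log ρ + σ * u) := by
        rw [Real.exp_add, Real.exp_log (by linarith)]
    _ ≤ Real.exp ((σ + Real.log ρ / m) * u) := Real.exp_le_exp.2 (by linarith)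

structure IsSwitchingMultinorm {d n : ℕ} (A : Fin n → Matrix (Fin d) (Fin d) ℝ) (m σ ρ : ℝ)
    (Nm : Fin n → (Fin d → ℝ) → ℝ) : Prop where
  isNorm : ∀ i, IsNorm (Nm i)
  apply_exp_le : ∀ i w τ, 0 ≤ τ → Nm i (exp (τ • A i) *ᵥ w) ≤ ρ * Real.exp (σ * τ) * Nm i w
  apply_exp_dwell_le : ∀ i i', i ≠ i' → ∀ w,
    Nm i' (exp (m • A i') *ᵥ w) ≤ Real.exp (σ * m) * Nm i w

lemma IsSwitchingMultinorm.apply_exp_le_of_ne {d n : ℕ} {A : Fin n → Matrix (Fin d) (Fin d) ℝ}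
    {Nm : Fin n → (Fin d → ℝ) → ℝ} {m σ ρ : ℝ} (hNm : IsSwitchingMultinorm A m σ ρ Nm)
    (hρ : 0 ≤ ρ) {i i' : Fin n} (hii' : i ≠ i') (w : Fin d → ℝ) {u : ℝ} (hu : m ≤ u) :
    Nm i' (exp (u • A i') *ᵥ w) ≤ ρ * Real.exp (σ * u) * Nm i w := by
  have hsplit : exp (u • A i') = exp ((u - m) • A i') * exp (m • A i') := by
    rw [← exp_add_smul, sub_add_cancel]
  have hexp : Real.exp (σ * (u - m)) * Real.exp (σ * m) = Real.exp (σ * u) := by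
    rw [← Real.exp_add]; ring_nf
  rw [hsplit, ← Matrix.mulVec_mulVec]
  calc _ ≤ ρ * Real.exp (σ * (u - m)) * Nm i' (exp (m • A i') *ᵥ w) :=
        hNm.apply_exp_le _ _ _ (by linarith)
    _ ≤ ρ * Real.exp (σ * (u - m)) * (Real.exp (σ * m) * Nm i w) := by
        gcongr
        exact hNm.apply_exp_dwell_le i i' hii' w
    _ = ρ * Real.exp (σ * u) * Nm i w := by rw [← hexp]; ring

lemma ENat.natCast_lt_of_natCast_succ_le {k : ℕ} {L : ℕ∞} (hk : ((k + 1 : ℕ) : ℕ∞) ≤ L) :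
    (k : ℕ∞) < L :=
  (ENat.add_one_le_iff (ENat.natCast_ne_top k)).1 (by exact_mod_cast hk)

/-- The switching intervals `[t k, t (k + 1)]`, `k < L`, are bounded; when `L` is finite the
last one is `[t L, ∞)`. -/
structure IsDwellTimeTrajectory {d n : ℕ} (A : Fin n → Matrix (Fin d) (Fin d) ℝ) (m : ℝ)
    (x : ℝ → Fin d → ℝ) (L : ℕ∞) (t : ℕ → ℝ) (j : ℕ → Fin n) : Prop where
  time_zero : t 0 = 0
  dwell : ∀ k : ℕ, (k : ℕ∞) < L → m ≤ t (k + 1) - t k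
  mode_succ_ne : ∀ k : ℕ, (k : ℕ∞) < L → j (k + 1) ≠ j k
  eq_exp_of_mem_Icc : ∀ k : ℕ, (k : ℕ∞) < L → ∀ s ∈ Set.Icc (t k) (t (k + 1)),
    x s = exp ((s - t k) • A (j k)) *ᵥ x (t k)
  eq_exp_of_last_le : ∀ L' : ℕ, L = L' → ∀ s, t L' ≤ s →
    x s = exp ((s - t L') • A (j L')) *ᵥ x (t L')
  tendsto : L = ⊤ → Filter.Tendsto t Filter.atTop Filter.atTop

namespace IsDwellTimeTrajectory

variable {d n : ℕ} {A : Fin n → Matrix (Fin d) (Fin d) ℝ} {m : ℝ} {x : ℝ → Fin d → ℝ} {L : ℕ∞}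
  {t : ℕ → ℝ} {j : ℕ → Fin n}

lemma exists_eq_exp (hx : IsDwellTimeTrajectory A m x L t j) {s : ℝ} (hs : 0 ≤ s) :
    ∃ k : ℕ, (k : ℕ∞) ≤ L ∧ t k ≤ s ∧ x s = exp ((s - t k) • A (j k)) *ᵥ x (t k) := by
  set S := {k : ℕ | (k : ℕ∞) ≤ L ∧ t k ≤ s}
  have h0 : 0 ∈ S := ⟨by simp, hx.time_zero ▸ hs⟩
  have hbdd : BddAbove S := by
    obtain rfl | ⟨L', rfl⟩ := (eq_or_ne L ⊤).imp id ENat.ne_top_iff_exists.1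
    · obtain ⟨B, hB⟩ := Filter.eventually_atTop.1 ((hx.tendsto rfl).eventually_gt_atTop s)
      exact ⟨B, fun k hk => not_lt.1 fun hBk => (hB k hBk.le).not_ge hk.2⟩
    · exact ⟨L', fun k hk => by exact_mod_cast hk.1⟩
  have hk : sSup S ∈ S := Nat.sSup_mem ⟨0, h0⟩ hbdd
  refine ⟨sSup S, hk.1, hk.2, ?_⟩
  rcases hk.1.lt_or_eq with hlt | heq
  · refine hx.eq_exp_of_mem_Icc _ hlt s ⟨hk.2, not_lt.1 fun hnext => ?_⟩
    have hsucc : sSup S + 1 ∈ S :=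
      ⟨by push_cast; exact (ENat.add_one_le_iff (ENat.natCast_ne_top _)).2 hlt, hnext.le⟩
    exact (Nat.lt_succ_self _).not_ge (le_csSup hbdd hsucc)
  · exact hx.eq_exp_of_last_le _ heq.symm s hk.2

variable {Nm : Fin n → (Fin d → ℝ) → ℝ} {σ ρ α : ℝ}

lemma apply_exp_smul_mulVec_le (hx : IsDwellTimeTrajectory A m x L t j) (hm : 0 ≤ m)
    (hρ : 0 ≤ ρ) (hNm : IsSwitchingMultinorm A m σ ρ Nm)
    (hα : ∀ u, m ≤ u → ρ * Real.exp (σ * u) ≤ Real.exp (α * u)) :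
    ∀ k : ℕ, (k : ℕ∞) ≤ L → ∀ u, m ≤ u →
      Nm (j k) (exp (u • A (j k)) *ᵥ x (t k)) ≤ Real.exp (α * (t k + u)) * Nm (j 0) (x 0) := by
  intro k
  induction k with
  | zero =>
    intro _ u hu
    rw [hx.time_zero, zero_add]
    exact (hNm.apply_exp_le _ _ _ (hm.trans hu)).trans
      (mul_le_mul_of_nonneg_right (hα u hu) ((hNm.isNorm _).nonneg _))
  | succ k ih =>
    intro hk u hu
    have hkL := ENat.natCast_lt_of_natCast_succ_le hk
    have hdwell := hx.dwell k hkL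
    have hend : Nm (j k) (x (t (k + 1))) ≤ Real.exp (α * t (k + 1)) * Nm (j 0) (x 0) := by
      rw [hx.eq_exp_of_mem_Icc k hkL _ ⟨by linarith, le_rfl⟩]
      simpa using ih hkL.le _ hdwell
    calc _ ≤ ρ * Real.exp (σ * u) * Nm (j k) (x (t (k + 1))) :=
          hNm.apply_exp_le_of_ne hρ (hx.mode_succ_ne k hkL).symm _ hu
      _ ≤ Real.exp (α * u) * (Real.exp (α * t (k + 1)) * Nm (j 0) (x 0)) :=
          mul_le_mul (hα u hu) hend ((hNm.isNorm _).nonneg _) (Real.exp_pos _).le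
      _ = Real.exp (α * (t (k + 1) + u)) * Nm (j 0) (x 0) := by rw [mul_add, Real.exp_add]; ring

lemma apply_le_of_mem_Icc (hx : IsDwellTimeTrajectory A m x L t j) (hm : 0 ≤ m)
    (hρ : 0 ≤ ρ) (hNm : IsSwitchingMultinorm A m σ ρ Nm)
    (hα : ∀ u, m ≤ u → ρ * Real.exp (σ * u) ≤ Real.exp (α * u))
    {k : ℕ} (hk : (k : ℕ∞) < L) {s : ℝ} (hs : s ∈ Set.Icc (t k + m) (t (k + 1))) :
    Nm (j k) (x s) ≤ Real.exp (α * s) * Nm (j 0) (x 0) := by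
  rw [hx.eq_exp_of_mem_Icc k hk s ⟨by linarith [hs.1], hs.2⟩]
  simpa using hx.apply_exp_smul_mulVec_le hm hρ hNm hα k hk.le (s - t k) (by linarith [hs.1])

lemma apply_time_le (hx : IsDwellTimeTrajectory A m x L t j) (hm : 0 ≤ m)
    (hρ : 0 ≤ ρ) (hNm : IsSwitchingMultinorm A m σ ρ Nm)
    (hα : ∀ u, m ≤ u → ρ * Real.exp (σ * u) ≤ Real.exp (α * u))
    {K : ℝ} (hK0 : 0 ≤ K) (hK : ∀ i i' y, Nm i y ≤ K * Nm i' y) {k : ℕ} (hk : (k : ℕ∞) ≤ L) :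
    Nm (j k) (x (t k)) ≤ K * (Real.exp (α * t k) * Nm (j 0) (x 0)) := by
  cases k with
  | zero => simpa [hx.time_zero] using hK (j 0) (j 0) (x 0)
  | succ k =>
    have hkL := ENat.natCast_lt_of_natCast_succ_le hk
    exact (hK _ (j k) _).trans (mul_le_mul_of_nonneg_left
      (hx.apply_le_of_mem_Icc hm hρ hNm hα hkL ⟨by linarith [hx.dwell k hkL], le_rfl⟩) hK0)

lemma exists_le_mul_exp (hx : IsDwellTimeTrajectory A m x L t j) (hm : 0 ≤ m)
    (hρ : 0 ≤ ρ) (hNm : IsSwitchingMultinorm A m σ ρ Nm)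
    (hα : ∀ u, m ≤ u → ρ * Real.exp (σ * u) ≤ Real.exp (α * u)) (hσα : σ ≤ α)
    {Nn : (Fin d → ℝ) → ℝ} (hNn : IsNorm Nn) :
    ∃ C, 0 ≤ C ∧ ∀ s, 0 ≤ s → Nn (x s) ≤ C * Real.exp (α * s) := by
  obtain ⟨K, hK0, hK⟩ := IsNorm.exists_forall_le_mul hNm.isNorm hNm.isNorm
  obtain ⟨Kn, hKn0, hKn⟩ := IsNorm.exists_forall_le_mul (fun _ : Unit => hNn) hNm.isNorm
  have hN0 := (hNm.isNorm (j 0)).nonneg (x 0)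
  refine ⟨Kn * ρ * K * Nm (j 0) (x 0), by positivity, fun s hs => ?_⟩
  obtain ⟨k, hk, hks, hxs⟩ := hx.exists_eq_exp hs
  have hexp : Real.exp (α * (s - t k)) * Real.exp (α * t k) = Real.exp (α * s) := by
    rw [← Real.exp_add]; ring_nf
  calc Nn (x s) ≤ Kn * Nm (j k) (x s) := hKn () _ _
    _ ≤ Kn * (ρ * Real.exp (σ * (s - t k)) * Nm (j k) (x (t k))) := by
        rw [hxs]; gcongr; exact hNm.apply_exp_le _ _ _ (sub_nonneg.2 hks)
    _ ≤ Kn * (ρ * Real.exp (α * (s - t k)) * (K * (Real.exp (α * t k) * Nm (j 0) (x 0)))) := by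
        gcongr
        · exact (hNm.isNorm _).nonneg _
        · exact hx.apply_time_le hm hρ hNm hα hK0 hK hk
    _ = Kn * ρ * K * Nm (j 0) (x 0) * Real.exp (α * s) := by rw [← hexp]; ring

end IsDwellTimeTrajectory

theorem trajectory_bound_of_extremal_multinorm_general {d n : ℕ}
    (A : Fin n → Matrix (Fin d) (Fin d) ℝ)
    (m h σh : ℝ) (hm : 0 < m) (hh : 0 < h)
    (Nm : Fin n → (Fin d → ℝ) → ℝ) (hNm : ∀ j, IsNorm (Nm j))
    (hext₁ : ∀ (j : Fin n) (x : Fin d → ℝ),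
      Nm j ((NormedSpace.exp (h • A j)).mulVec x) ≤ Real.exp (σh * h) * Nm j x)
    (hext₂ : ∀ (i j : Fin n), i ≠ j → ∀ x : Fin d → ℝ,
      Nm j ((NormedSpace.exp (m • A j)).mulVec x) ≤ Real.exp (σh * m) * Nm i x)
    (c : ℝ)
    (hc : c = ⨆ j : Fin n, opNorm (Nm j) ((A j - σh • (1 : Matrix (Fin d) (Fin d) ℝ)) ^ 2))
    (hch : c * h ^ 2 < 8)
    (α : ℝ) (hα : α = σh - (1 / m) * Real.log (1 - c * h ^ 2 / 8))
    (x : ℝ → (Fin d → ℝ)) (L : ℕ∞) (t : ℕ → ℝ) (j : ℕ → Fin n)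
    (ht0 : t 0 = 0)
    (hdwell : ∀ k : ℕ, (k : ℕ∞) < L → m ≤ t (k + 1) - t k)
    (hmode : ∀ k : ℕ, (k : ℕ∞) < L → j (k + 1) ≠ j k)
    (htraj : ∀ k : ℕ, (k : ℕ∞) < L → ∀ s ∈ Set.Icc (t k) (t (k + 1)),
      x s = (NormedSpace.exp ((s - t k) • A (j k))).mulVec (x (t k)))
    (hlast : ∀ L' : ℕ, L = (L' : ℕ∞) → ∀ s : ℝ, t L' ≤ s →
      x s = (NormedSpace.exp ((s - t L') • A (j L'))).mulVec (x (t L')))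
    (hinf : L = ⊤ → Filter.Tendsto t Filter.atTop Filter.atTop) :
    (∀ k : ℕ, (k : ℕ∞) < L → ∀ s ∈ Set.Icc (t k + m) (t (k + 1)),
      Nm (j k) (x s) ≤ Real.exp (α * s) * Nm (j 0) (x 0)) ∧
    (∀ Nn : (Fin d → ℝ) → ℝ, IsNorm Nn →
      ∃ C : ℝ, 0 ≤ C ∧ ∀ s : ℝ, 0 ≤ s → Nn (x s) ≤ C * Real.exp (α * s)) := by
  set ρ := (1 - c * h ^ 2 / 8)⁻¹
  have hc0 : 0 ≤ c := hc ▸ Real.iSup_nonneg fun i => (hNm i).opNorm_nonneg _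
  have hρ : 1 ≤ ρ := one_le_inv_iff₀.2 ⟨by linarith, by nlinarith [sq_nonneg h]⟩
  have hα' : α = σh + Real.log ρ / m := by rw [hα, Real.log_inv]; ring
  have hcj : ∀ i y, Nm i ((A i - σh • 1) ^ 2 *ᵥ y) ≤ c * Nm i y := fun i y => by
    rw [hc]; exact IsNorm.apply_mulVec_le_iSup_opNorm_mul hNm (fun i => (A i - σh • 1) ^ 2) i y
  have hmulti : IsSwitchingMultinorm A m σh ρ Nm := ⟨hNm, fun i w τ hτ =>
    (hNm i).apply_exp_smul_mulVec_le_mul_exp hh (hext₁ i) hc0 (hcj i) hch w hτ, hext₂⟩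
  have hαu : ∀ u, m ≤ u → ρ * Real.exp (σh * u) ≤ Real.exp (α * u) := fun u hu =>
    hα' ▸ mul_exp_le_exp_add_log_div_mul hρ hm hu
  have hσα : σh ≤ α := hα' ▸ le_add_of_nonneg_right (div_nonneg (Real.log_nonneg hρ) hm.le)
  have hx : IsDwellTimeTrajectory A m x L t j := ⟨ht0, hdwell, hmode, htraj, hlast, hinf⟩
  exact ⟨fun k hk s hs => hx.apply_le_of_mem_Icc hm.le (by linarith) hmulti hαu hk hs,
    fun Nn hNn => hx.exists_le_mul_exp hm.le (by linarith) hmulti hαu hσα hNn⟩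

/-- **Trajectory bound via an extremal multinorm.**
`A 0, …, A (n-1)` are `d×d` real matrices, `m > 0` is the dwell time, `0 < h ≤ m` the
discretization step, and the norms `Nm j` form an extremal multinorm datum for the
`h`-discretization with value `σh`, i.e. `Nm j (e^{hA_j} x) ≤ e^{σh·h}·Nm j x` and
`Nm j (e^{mA_j} x) ≤ e^{σh·m}·Nm i x` for `i ≠ j`.  With
`c = max_j ‖(A_j − σh·I)²‖_j` assumed to satisfy `c·h² < 8`, and
`α = σh − (1/m)·ln(1 − c·h²/8)`, every trajectory `x` of the switched system with dwell
time at least `m` — the switching times being `t 0 = 0 < t 1 < t 2 < ⋯` (the number of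
bounded switching intervals is `L : ℕ∞`; if `L = L'` is finite the last interval is
`[t L', ∞)`) and the modes `j k` — satisfies:
(i) for every `k < L` and every `s ∈ [t k + m, t (k+1)]`,
    `Nm (j k) (x s) ≤ e^{α s} · Nm (j 0) (x 0)`; and
(ii) for any fixed norm `Nn` on `ℝ^d` there is a constant `C ≥ 0` with
    `Nn (x s) ≤ C·e^{α s}` for all `s ≥ 0`. -/
theorem trajectory_bound_of_extremal_multinorm {d n : ℕ} (hn : 0 < n)
    (A : Fin n → Matrix (Fin d) (Fin d) ℝ)
    (m h σh : ℝ) (hm : 0 < m) (hh : 0 < h) (hhm : h ≤ m)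
    (Nm : Fin n → (Fin d → ℝ) → ℝ) (hNm : ∀ j, IsNorm (Nm j))
    (hext₁ : ∀ (j : Fin n) (x : Fin d → ℝ),
      Nm j ((NormedSpace.exp (h • A j)).mulVec x) ≤ Real.exp (σh * h) * Nm j x)
    (hext₂ : ∀ (i j : Fin n), i ≠ j → ∀ x : Fin d → ℝ,
      Nm j ((NormedSpace.exp (m • A j)).mulVec x) ≤ Real.exp (σh * m) * Nm i x)
    (c : ℝ)
    (hc : c = ⨆ j : Fin n, opNorm (Nm j) ((A j - σh • (1 : Matrix (Fin d) (Fin d) ℝ)) ^ 2))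
    (hch : c * h ^ 2 < 8)
    (α : ℝ) (hα : α = σh - (1 / m) * Real.log (1 - c * h ^ 2 / 8))
    (x : ℝ → (Fin d → ℝ)) (L : ℕ∞) (t : ℕ → ℝ) (j : ℕ → Fin n)
    (ht0 : t 0 = 0)
    (hdwell : ∀ k : ℕ, (k : ℕ∞) < L → m ≤ t (k + 1) - t k)
    (hmode : ∀ k : ℕ, (k : ℕ∞) < L → j (k + 1) ≠ j k)
    (htraj : ∀ k : ℕ, (k : ℕ∞) < L → ∀ s ∈ Set.Icc (t k) (t (k + 1)),
      x s = (NormedSpace.exp ((s - t k) • A (j k))).mulVec (x (t k)))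
    (hlast : ∀ L' : ℕ, L = (L' : ℕ∞) → ∀ s : ℝ, t L' ≤ s →
      x s = (NormedSpace.exp ((s - t L') • A (j L'))).mulVec (x (t L')))
    (hinf : L = ⊤ → Filter.Tendsto t Filter.atTop Filter.atTop) :
    (∀ k : ℕ, (k : ℕ∞) < L → ∀ s ∈ Set.Icc (t k + m) (t (k + 1)),
      Nm (j k) (x s) ≤ Real.exp (α * s) * Nm (j 0) (x 0)) ∧
    (∀ Nn : (Fin d → ℝ) → ℝ, IsNorm Nn →
      ∃ C : ℝ, 0 ≤ C ∧ ∀ s : ℝ, 0 ≤ s → Nn (x s) ≤ C * Real.exp (α * s)) :=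
  trajectory_bound_of_extremal_multinorm_general A m h σh hm hh Nm hNm hext₁ hext₂ c hc hch α hα x L
    t j ht0 hdwell hmode htraj hlast hinf
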